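/- arXiv:1405.3427 — 2 statements merged into one kernel-verified Lean document; each statement's English description precedes it below -/
import Mathlib

section
/- Let R be an SMLL net. Define a relation ≺ on the links of R by: l₁ ≺ l₂ iff there is a polarized path from l₁ to l₂, i.e. a path of polarized edges (edges whose type is a positive or a negative formula) connecting polarized nodes, going upwards on negative edges and downwards on positive edges, and not entering any box. Then the set of links of R equipped with ≺ is a finite strict partial order (≺ is transitive and irreflexive). -/
/-! # SMLL: multiplicative linear logic with synchronization

Formalization of the proof-structures, correctness criterion, reduction and
multi-token machine (SIAM) of Dal Lago, Faggian, Hasuo, Yoshimizu,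
"The Geometry of Synchronization". -/

/-- SMLL formulas (in negation normal form):
`A ::= 1 | ⊥ | X | X⊥ | A ⊗ A | A ⅋ A`. -/
inductive Formula : Type
  | one : Formula
  | bot : Formula
  | var : ℕ → Formula
  | covar : ℕ → Formula
  | tens : Formula → Formula → Formula
  | parr : Formula → Formula → Formula
  deriving DecidableEq

namespace Formula

/-- Linear negation. -/
def dual : Formula → Formula
  | one => bot
  | bot => one
  | var n => covar n
  | covar n => var n
  | tens A B => parr A.dual B.dual
  | parr A B => tens A.dual B.dual

/-- Positive formulas: `P ::= 1 | P ⊗ P`. -/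
inductive Positive : Formula → Prop
  | one : Positive one
  | tens {A B : Formula} : Positive A → Positive B → Positive (tens A B)

/-- Negative formulas: `N ::= ⊥ | N ⅋ N`. -/
inductive Negative : Formula → Prop
  | bot : Negative bot
  | parr {A B : Formula} : Negative A → Negative B → Negative (parr A B)

/-- A formula is polarized when it is positive or negative. -/
def Polarized (A : Formula) : Prop := Positive A ∨ Negative A

/-- Whether `⊥` occurs in a formula. -/
def hasBotB : Formula → Bool
  | one => false
  | bot => true
  | var _ => false
  | covar _ => false
  | tens A B => hasBotB A || hasBotB B
  | parr A B => hasBotB A || hasBotB B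

/-- Addresses of occurrences inside a formula: `false` = left, `true` = right. -/
abbrev Addr := List Bool

/-- Subformula at a given address (if the address is meaningful). -/
def sub : Formula → Addr → Option Formula
  | A, [] => some A
  | tens A _, false :: m => sub A m
  | tens _ B, true :: m => sub B m
  | parr A _, false :: m => sub A m
  | parr _ B, true :: m => sub B m
  | _, _ :: _ => none

def IsAtom : Formula → Prop
  | one => True
  | bot => True
  | var _ => True
  | covar _ => True
  | tens _ _ => False
  | parr _ _ => False

/-- `m` is the address of an occurrence of an atom in `A`. -/
def AtomOcc (A : Formula) (m : Addr) : Prop := ∃ a, sub A m = some a ∧ IsAtom a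

/-- The atom occurrence at `m` in `A` is positive (it is `1` or `X`). -/
def PosOcc (A : Formula) (m : Addr) : Prop :=
  ∃ a, sub A m = some a ∧ (a = one ∨ ∃ n, a = var n)

/-- The atom occurrence at `m` in `A` is negative (it is `⊥` or `X⊥`). -/
def NegOcc (A : Formula) (m : Addr) : Prop :=
  ∃ a, sub A m = some a ∧ (a = bot ∨ ∃ n, a = covar n)

theorem NegOcc.atomOcc {A : Formula} {m : Addr} (h : NegOcc A m) : AtomOcc A m := by
  obtain ⟨a, ha, h⟩ := h
  refine ⟨a, ha, ?_⟩
  rcases h with rfl | ⟨n, rfl⟩ <;> trivial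

theorem PosOcc.atomOcc {A : Formula} {m : Addr} (h : PosOcc A m) : AtomOcc A m := by
  obtain ⟨a, ha, h⟩ := h
  refine ⟨a, ha, ?_⟩
  rcases h with rfl | ⟨n, rfl⟩ <;> trivial

end Formula

/-- The sorts of links of an SMLL structure. -/
inductive LinkSort : Type
  | ax | cut | tens | parr | one | bot | sync
  deriving DecidableEq

/-- An SMLL proof-structure (with boxes): a finite directed multigraph whose
edges are typed by formulas and whose nodes are links.  Every edge is the
conclusion of exactly one link (its `src`); it is the premiss of the link
`tgt`, if any (edges with no target are the conclusions of the structure).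
`pIdx` indexes an edge among the premisses of its target (for `⊗`/`⅋`-links:
`0` = left, `1` = right; for sync links it pairs premisses with conclusions);
`cIdx` indexes an edge among the conclusions of its source (for sync links,
the `i`-th conclusion corresponds to the `i`-th premiss).  Each `bot`-link is
the lock of a box; `box n` is the innermost box containing the node `n` and
`boxes n` is the set of all boxes containing `n`. -/
structure Struct : Type 1 where
  Edge : Type
  Node : Type
  edgeFintype : Fintype Edge
  nodeFintype : Fintype Node
  edgeDecEq : DecidableEq Edge
  nodeDecEq : DecidableEq Node
  typ : Edge → Formula
  sort : Node → LinkSort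
  src : Edge → Node
  tgt : Edge → Option Node
  pIdx : Edge → ℕ
  cIdx : Edge → ℕ
  box : Node → Option Node
  boxes : Node → Finset Node

attribute [instance] Struct.edgeFintype Struct.nodeFintype
attribute [instance] Struct.edgeDecEq Struct.nodeDecEq

namespace Struct

variable (S : Struct)

/-- The conclusions of a link. -/
def concls (n : S.Node) : Finset S.Edge := Finset.univ.filter fun e => S.src e = n

/-- The premisses of a link. -/
def prems (n : S.Node) : Finset S.Edge := Finset.univ.filter fun e => S.tgt e = some n

/-- The conclusions of the structure. -/
def IsConcl (e : S.Edge) : Prop := S.tgt e = none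

/-- Well-formedness of an SMLL structure: the constraints that the sort of a
link induces on the number and the types of its premisses and conclusions,
together with the coherence of the nesting of boxes. -/
def WF : Prop :=
  (∀ n, S.sort n = .ax → S.prems n = ∅ ∧
    ∃ e f, e ≠ f ∧ S.concls n = {e, f} ∧ S.typ f = (S.typ e).dual) ∧
  (∀ n, S.sort n = .cut → S.concls n = ∅ ∧
    ∃ e f, e ≠ f ∧ S.prems n = {e, f} ∧ S.typ f = (S.typ e).dual) ∧
  (∀ n, S.sort n = .tens → ∃ e f g, e ≠ f ∧ S.prems n = {e, f} ∧
    S.pIdx e = 0 ∧ S.pIdx f = 1 ∧ S.concls n = {g} ∧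
    S.typ g = .tens (S.typ e) (S.typ f)) ∧
  (∀ n, S.sort n = .parr → ∃ e f g, e ≠ f ∧ S.prems n = {e, f} ∧
    S.pIdx e = 0 ∧ S.pIdx f = 1 ∧ S.concls n = {g} ∧
    S.typ g = .parr (S.typ e) (S.typ f)) ∧
  (∀ n, S.sort n = .one → S.prems n = ∅ ∧ ∃ e, S.concls n = {e} ∧ S.typ e = .one) ∧
  (∀ n, S.sort n = .bot → S.prems n = ∅ ∧ ∃ e, S.concls n = {e} ∧ S.typ e = .bot) ∧
  (∀ n, S.sort n = .sync →
    (∀ e ∈ S.prems n, (S.typ e).Polarized) ∧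
    (∀ e ∈ S.prems n, ∃! f, f ∈ S.concls n ∧ S.cIdx f = S.pIdx e) ∧
    (∀ f ∈ S.concls n, ∃! e, e ∈ S.prems n ∧ S.pIdx e = S.cIdx f) ∧
    (∀ e ∈ S.prems n, ∀ f ∈ S.concls n, S.cIdx f = S.pIdx e → S.typ f = S.typ e)) ∧
  (∀ n b, b ∈ S.boxes n → S.sort b = .bot) ∧
  (∀ n, S.box n = none → S.boxes n = ∅) ∧
  (∀ n b, S.box n = some b → b ∉ S.boxes b ∧ S.boxes n = insert b (S.boxes b)) ∧
  (∀ e n, S.tgt e = some n → S.boxes n ⊆ S.boxes (S.src e))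

/-- `b` is the representative of the node `m` in the level-`ℓ` graph (the
graph in which each box strictly below level `ℓ` is collapsed to a single
box-node, identified with its `bot`-link).  For `ℓ = none` this is the
`0`-graph. -/
def RepAt (ℓ : Option S.Node) (m b : S.Node) : Prop :=
  (S.box m = ℓ ∧ b = m) ∨ (b ∈ S.boxes m ∧ S.box b = ℓ)

/-- Edge `e` joins the nodes `u` and `v` (undirectedly) in the level-`ℓ` graph. -/
def ConnectsAt (ℓ : Option S.Node) (e : S.Edge) (u v : S.Node) : Prop :=
  ∃ t, S.tgt e = some t ∧ (S.box t = ℓ ∨ S.box (S.src e) = ℓ) ∧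
    ((S.RepAt ℓ (S.src e) u ∧ S.RepAt ℓ t v) ∨
     (S.RepAt ℓ (S.src e) v ∧ S.RepAt ℓ t u))

/-- The out-edges of a sync link are its positive conclusions and its negative
premisses. -/
def OutEdgeOf (l : S.Node) (e : S.Edge) : Prop :=
  S.sort l = .sync ∧
  ((S.src e = l ∧ (S.typ e).Positive) ∨ (S.tgt e = some l ∧ (S.typ e).Negative))

/-- There is a switching cycle in the level-`ℓ` graph: a cyclic undirected
simple path which uses at most one of the two premisses of each `⅋`-link and
at most one out-edge of each sync link. -/
def SwitchingCycleAt (ℓ : Option S.Node) : Prop :=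
  ∃ (k : ℕ) (v : Fin (k + 1) → S.Node) (e : Fin (k + 1) → S.Edge),
    Function.Injective v ∧ Function.Injective e ∧
    (∀ i, S.ConnectsAt ℓ (e i) (v i) (v (i + 1))) ∧
    (∀ p, S.sort p = .parr → Set.Subsingleton {i | S.tgt (e i) = some p}) ∧
    (∀ l, S.sort l = .sync → Set.Subsingleton {i | S.OutEdgeOf l (e i)})

/-- Correctness criterion: no switching cycle in the `0`-graph, and,
recursively, no switching cycle in the graph of the content of any box. -/
def Correct : Prop := ∀ ℓ : Option S.Node, ¬ S.SwitchingCycleAt ℓ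

/-- A net is a well-formed correct structure. -/
def IsNet : Prop := S.WF ∧ S.Correct

/-! ## Sync paths and hereditary conclusions -/

/-- One step of a sync path: entering a sync link on a premiss and coming out
on the corresponding conclusion. -/
def SyncStepE (e f : S.Edge) : Prop :=
  ∃ l, S.sort l = .sync ∧ S.tgt e = some l ∧ S.src f = l ∧ S.cIdx f = S.pIdx e

/-- `e` is a hereditary conclusion of the link `l`: there is a sync path from
a conclusion of `l` to `e`. -/
def HereditaryConcl (l : S.Node) (e : S.Edge) : Prop :=
  ∃ f, S.src f = l ∧ Relation.ReflTransGen S.SyncStepE f e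

/-- The edge emerges from a box: its source is a `bot`-link (the edge is the
lock of a box) or lies inside some box. -/
def FromBox (e : S.Edge) : Prop := S.sort (S.src e) = .bot ∨ S.box (S.src e) ≠ none

/-- `e` is a hereditary conclusion of a box. -/
def HereditaryBoxConcl (e : S.Edge) : Prop :=
  ∃ f, S.FromBox f ∧ Relation.ReflTransGen S.SyncStepE f e

/-- A ready cut: a cut at depth 0 neither of whose premisses is a hereditary
conclusion of a box. -/
def ReadyCut (c : S.Node) : Prop :=
  S.sort c = .cut ∧ S.box c = none ∧ ∀ e ∈ S.prems c, ¬ S.HereditaryBoxConcl e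

/-! ## Polarized paths and the order on links -/

/-- A node is polarized when all of its conclusions are polarized. -/
def PolarizedNode (n : S.Node) : Prop := ∀ e ∈ S.concls n, (S.typ e).Polarized

/-- A single step of a polarized path from link `a` to link `b` along the
polarized edge `e`: downwards on positive edges, upwards on negative edges,
connecting polarized nodes and never entering boxes. -/
def PolStep (e : S.Edge) (a b : S.Node) : Prop :=
  S.box a = none ∧ S.box b = none ∧ S.PolarizedNode a ∧ S.PolarizedNode b ∧
  (((S.typ e).Positive ∧ S.src e = a ∧ S.tgt e = some b) ∨
   ((S.typ e).Negative ∧ S.tgt e = some a ∧ S.src e = b))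

/-- `a ≺ b` : there is a (simple) polarized path from `a` to `b`. -/
def prec (a b : S.Node) : Prop :=
  ∃ (k : ℕ) (v : Fin (k + 2) → S.Node) (e : Fin (k + 1) → S.Edge),
    v 0 = a ∧ v (Fin.last _) = b ∧
    Function.Injective v ∧ Function.Injective e ∧
    ∀ i : Fin (k + 1), S.PolStep (e i) (v i.castSucc) (v i.succ)

/-- SMLL⁰ structures: no unit links (hence no boxes). -/
def UnitFree : Prop := ∀ n : S.Node, S.sort n ≠ .one ∧ S.sort n ≠ .bot

/-- Closed structures: no `⊥` occurs in the conclusions. -/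
def Closed : Prop := ∀ e : S.Edge, S.tgt e = none → (S.typ e).hasBotB = false

end Struct

/-! ## Reduction -/

/-- A partial injection `j` whose (some-)range is exactly `X`. -/
def PInjOnto {α β : Type*} (j : α → Option β) (X : Set β) : Prop :=
  (∀ a a' b, j a = some b → j a' = some b → a = a') ∧
  (∀ a b, j a = some b → b ∈ X) ∧
  (∀ b ∈ X, ∃ a, j a = some b)

/-- `j` is total. -/
def JTotal {α β : Type*} (j : α → Option β) : Prop := ∀ a, j a ≠ none

/-- The structures `Q` and `R` agree, along the correspondences `jN`, `jE`,
on all edges outside `XE` and all nodes outside `XN`. -/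
def AgreesOn (Q R : Struct) (jN : Q.Node → Option R.Node)
    (jE : Q.Edge → Option R.Edge) (XE : Set R.Edge) (XN : Set R.Node) : Prop :=
  (∀ x y, jE x = some y → y ∉ XE →
    Q.typ x = R.typ y ∧ jN (Q.src x) = some (R.src y) ∧
    (Q.tgt x).bind jN = R.tgt y ∧ Q.pIdx x = R.pIdx y ∧ Q.cIdx x = R.cIdx y) ∧
  (∀ n m, jN n = some m → m ∉ XN →
    Q.sort n = R.sort m ∧ (Q.box n).bind jN = R.box m ∧
    (∀ b b', jN b = some b' → (b ∈ Q.boxes n ↔ b' ∈ R.boxes m)))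

/-- The `ax/cut` step: a cut between a conclusion `v` of an axiom `a` and the
dual premiss is removed together with the axiom; the remaining conclusion `u`
of the axiom and the remaining premiss `q` of the cut are merged. -/
def AxCutStep (R Q : Struct) : Prop :=
  ∃ (a c : R.Node) (v u q : R.Edge),
    R.sort a = .ax ∧ R.sort c = .cut ∧ R.box a = none ∧ R.box c = none ∧
    v ≠ u ∧ v ≠ q ∧ u ≠ q ∧
    R.concls a = {v, u} ∧ R.prems c = {v, q} ∧
    ∃ (jN : Q.Node → Option R.Node) (jE : Q.Edge → Option R.Edge),
      JTotal jN ∧ JTotal jE ∧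
      PInjOnto jN {n | n ≠ a ∧ n ≠ c} ∧
      PInjOnto jE {x | x ≠ v ∧ x ≠ u} ∧
      AgreesOn Q R jN jE {q} ∅ ∧
      (∀ x, jE x = some q →
        Q.typ x = R.typ q ∧ jN (Q.src x) = some (R.src q) ∧
        (Q.tgt x).bind jN = R.tgt u ∧ Q.pIdx x = R.pIdx u ∧ Q.cIdx x = R.cIdx q)

/-- The `⊗/⅋` step: a cut between `A ⊗ B` and `A⊥ ⅋ B⊥` is replaced by two
cuts between the respective premisses. -/
def TensParrStep (R Q : Struct) : Prop :=
  ∃ (c t p : R.Node) (s s' a1 a2 b1 b2 : R.Edge),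
    R.sort c = .cut ∧ R.sort t = .tens ∧ R.sort p = .parr ∧
    R.box c = none ∧ R.box t = none ∧ R.box p = none ∧
    s ≠ s' ∧ R.prems c = {s, s'} ∧ R.concls t = {s} ∧ R.concls p = {s'} ∧
    a1 ≠ a2 ∧ R.prems t = {a1, a2} ∧ R.pIdx a1 = 0 ∧ R.pIdx a2 = 1 ∧
    b1 ≠ b2 ∧ R.prems p = {b1, b2} ∧ R.pIdx b1 = 0 ∧ R.pIdx b2 = 1 ∧
    ∃ (jN : Q.Node → Option R.Node) (jE : Q.Edge → Option R.Edge) (c' : Q.Node),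
      JTotal jE ∧
      PInjOnto jN {n | n ≠ t ∧ n ≠ p} ∧
      PInjOnto jE {x | x ≠ s ∧ x ≠ s'} ∧
      jN c' = none ∧ (∀ n, jN n = none → n = c') ∧
      Q.sort c' = .cut ∧ Q.box c' = none ∧ Q.boxes c' = ∅ ∧
      AgreesOn Q R jN jE {a1, a2, b1, b2} ∅ ∧
      (∀ x y, jE x = some y → y = a1 ∨ y = b1 →
        Q.typ x = R.typ y ∧ jN (Q.src x) = some (R.src y) ∧
        (Q.tgt x).bind jN = some c ∧ Q.cIdx x = R.cIdx y) ∧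
      (∀ x y, jE x = some y → y = a2 ∨ y = b2 →
        Q.typ x = R.typ y ∧ jN (Q.src x) = some (R.src y) ∧
        Q.tgt x = some c' ∧ Q.cIdx x = R.cIdx y)

/-- Commutation of a sync link with a `⊗` or `⅋` link: the sync link acting
on the conclusion `z` of the multiplicative link `m` (with corresponding sync
conclusion `w`) is pushed above `m`, now acting on the two premisses `x`, `y`
of `m` via two fresh sync positions (indices `i₁`, `i₂`) with fresh edges
`x'`, `y'`. -/
def SyncMultStep (R Q : Struct) : Prop :=
  ∃ (l m : R.Node) (z w x y : R.Edge) (i₁ i₂ : ℕ),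
    R.sort l = .sync ∧ (R.sort m = .tens ∨ R.sort m = .parr) ∧
    R.box l = none ∧ R.box m = none ∧
    R.src z = m ∧ R.tgt z = some l ∧ R.src w = l ∧ R.cIdx w = R.pIdx z ∧
    x ≠ y ∧ R.prems m = {x, y} ∧ R.pIdx x = 0 ∧ R.pIdx y = 1 ∧
    i₁ ≠ i₂ ∧
    (∀ e, R.tgt e = some l → R.pIdx e ≠ i₁ ∧ R.pIdx e ≠ i₂) ∧
    (∀ e, R.src e = l → R.cIdx e ≠ i₁ ∧ R.cIdx e ≠ i₂) ∧
    ∃ (jN : Q.Node → Option R.Node) (jE : Q.Edge → Option R.Edge)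
      (l' m' : Q.Node) (x' y' : Q.Edge),
      JTotal jN ∧ PInjOnto jN Set.univ ∧
      PInjOnto jE {e | e ≠ z} ∧
      jN l' = some l ∧ jN m' = some m ∧
      x' ≠ y' ∧ jE x' = none ∧ jE y' = none ∧ (∀ e, jE e = none → e = x' ∨ e = y') ∧
      AgreesOn Q R jN jE {x, y, w} ∅ ∧
      (∀ e, jE e = some x →
        Q.typ e = R.typ x ∧ jN (Q.src e) = some (R.src x) ∧
        Q.tgt e = some l' ∧ Q.pIdx e = i₁ ∧ Q.cIdx e = R.cIdx x) ∧
      (∀ e, jE e = some y →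
        Q.typ e = R.typ y ∧ jN (Q.src e) = some (R.src y) ∧
        Q.tgt e = some l' ∧ Q.pIdx e = i₂ ∧ Q.cIdx e = R.cIdx y) ∧
      (∀ e, jE e = some w →
        Q.typ e = R.typ w ∧ Q.src e = m' ∧
        (Q.tgt e).bind jN = R.tgt w ∧ Q.pIdx e = R.pIdx w ∧ Q.cIdx e = R.cIdx w) ∧
      (Q.typ x' = R.typ x ∧ Q.src x' = l' ∧ Q.tgt x' = some m' ∧
        Q.pIdx x' = 0 ∧ Q.cIdx x' = i₁) ∧
      (Q.typ y' = R.typ y ∧ Q.src y' = l' ∧ Q.tgt y' = some m' ∧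
        Q.pIdx y' = 1 ∧ Q.cIdx y' = i₂)

/-- Commutation of a sync link with an axiom: a sync link acting on a
positive conclusion `u` of an axiom (with corresponding conclusion `u'`) is
moved to the axiom's other conclusion `v` (of type `P⊥`), with a fresh sync
position of index `j` and fresh edge `v'`. -/
def SyncAxStep (R Q : Struct) : Prop :=
  ∃ (l a : R.Node) (u u' v : R.Edge) (j : ℕ),
    R.sort l = .sync ∧ R.sort a = .ax ∧ R.box l = none ∧ R.box a = none ∧
    (R.typ u).Positive ∧ u ≠ v ∧ R.concls a = {u, v} ∧
    R.tgt u = some l ∧ R.src u' = l ∧ R.cIdx u' = R.pIdx u ∧ u' ≠ u ∧ u' ≠ v ∧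
    (∀ e, R.tgt e = some l → R.pIdx e ≠ j) ∧
    (∀ e, R.src e = l → R.cIdx e ≠ j) ∧
    ∃ (jN : Q.Node → Option R.Node) (jE : Q.Edge → Option R.Edge)
      (l' a' : Q.Node) (v' : Q.Edge),
      JTotal jN ∧ PInjOnto jN Set.univ ∧ PInjOnto jE {e | e ≠ u} ∧
      jN l' = some l ∧ jN a' = some a ∧
      jE v' = none ∧ (∀ e, jE e = none → e = v') ∧
      AgreesOn Q R jN jE {u', v} ∅ ∧
      (∀ e, jE e = some u' →
        Q.typ e = R.typ u' ∧ Q.src e = a' ∧ Q.cIdx e = R.cIdx u ∧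
        (Q.tgt e).bind jN = R.tgt u' ∧ Q.pIdx e = R.pIdx u') ∧
      (∀ e, jE e = some v →
        Q.typ e = R.typ v ∧ Q.src e = a' ∧ Q.cIdx e = R.cIdx v ∧
        Q.tgt e = some l' ∧ Q.pIdx e = j) ∧
      (Q.typ v' = R.typ v ∧ Q.src v' = l' ∧ Q.cIdx v' = j ∧
        (Q.tgt v').bind jN = R.tgt v ∧ Q.pIdx v' = R.pIdx v)

/-- Commutation of a sync link with a cut: a sync link acting on the premiss
`d'` (of negative type `P⊥`) of a cut is moved to the other premiss `q`. -/
def SyncCutStep (R Q : Struct) : Prop :=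
  ∃ (l c : R.Node) (d d' q : R.Edge) (j : ℕ),
    R.sort l = .sync ∧ R.sort c = .cut ∧ R.box l = none ∧ R.box c = none ∧
    (R.typ d').Negative ∧
    R.src d' = l ∧ R.tgt d' = some c ∧ R.tgt d = some l ∧ R.pIdx d = R.cIdx d' ∧
    d' ≠ q ∧ d ≠ q ∧ d ≠ d' ∧ R.prems c = {d', q} ∧
    (∀ e, R.tgt e = some l → R.pIdx e ≠ j) ∧
    (∀ e, R.src e = l → R.cIdx e ≠ j) ∧
    ∃ (jN : Q.Node → Option R.Node) (jE : Q.Edge → Option R.Edge)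
      (l' c' : Q.Node) (q' : Q.Edge),
      JTotal jN ∧ PInjOnto jN Set.univ ∧ PInjOnto jE {e | e ≠ d'} ∧
      jN l' = some l ∧ jN c' = some c ∧
      jE q' = none ∧ (∀ e, jE e = none → e = q') ∧
      AgreesOn Q R jN jE {d, q} ∅ ∧
      (∀ e, jE e = some d →
        Q.typ e = R.typ d ∧ jN (Q.src e) = some (R.src d) ∧ Q.cIdx e = R.cIdx d ∧
        Q.tgt e = some c' ∧ Q.pIdx e = R.pIdx d') ∧
      (∀ e, jE e = some q →
        Q.typ e = R.typ q ∧ jN (Q.src e) = some (R.src q) ∧ Q.cIdx e = R.cIdx q ∧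
        Q.tgt e = some l' ∧ Q.pIdx e = j) ∧
      (Q.typ q' = R.typ q ∧ Q.src q' = l' ∧ Q.cIdx q' = j ∧
        Q.tgt q' = some c' ∧ Q.pIdx q' = R.pIdx q)

/-- Sync elimination: a sync link all of whose premisses are conclusions of
`one`-links is erased, merging each premiss with its corresponding
conclusion. -/
def SyncElimStep (R Q : Struct) : Prop :=
  ∃ l : R.Node, R.sort l = .sync ∧ R.box l = none ∧
    (∀ e ∈ R.prems l, R.sort (R.src e) = .one) ∧
    ∃ (jN : Q.Node → Option R.Node) (jE : Q.Edge → Option R.Edge),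
      JTotal jN ∧ JTotal jE ∧
      PInjOnto jN {n | n ≠ l} ∧
      PInjOnto jE {e | R.src e ≠ l} ∧
      AgreesOn Q R jN jE {e | R.tgt e = some l} ∅ ∧
      (∀ x e f, jE x = some e → R.tgt e = some l → R.src f = l →
        R.cIdx f = R.pIdx e →
        Q.typ x = R.typ e ∧ jN (Q.src x) = some (R.src e) ∧
        (Q.tgt x).bind jN = R.tgt f ∧ Q.pIdx x = R.pIdx f ∧ Q.cIdx x = R.cIdx e)

/-- The `one/⊥` step (box opening): a cut between the conclusion `o` of a
`one`-link `n₁` and the lock `k` of a box `b` removes the cut, the `one`-link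
and the `bot`-link, and opens the box. -/
def OneBotStep (R Q : Struct) : Prop :=
  ∃ (c n₁ b : R.Node) (o k : R.Edge),
    R.sort c = .cut ∧ R.sort n₁ = .one ∧ R.sort b = .bot ∧
    R.box c = none ∧ R.box n₁ = none ∧ R.box b = none ∧
    o ≠ k ∧ R.prems c = {o, k} ∧ R.src o = n₁ ∧ R.src k = b ∧
    ∃ (jN : Q.Node → Option R.Node) (jE : Q.Edge → Option R.Edge),
      JTotal jN ∧ JTotal jE ∧
      PInjOnto jN {n | n ≠ c ∧ n ≠ n₁ ∧ n ≠ b} ∧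
      PInjOnto jE {e | e ≠ o ∧ e ≠ k} ∧
      (∀ x e, jE x = some e →
        Q.typ x = R.typ e ∧ jN (Q.src x) = some (R.src e) ∧
        (Q.tgt x).bind jN = R.tgt e ∧ Q.pIdx x = R.pIdx e ∧ Q.cIdx x = R.cIdx e) ∧
      (∀ n m, jN n = some m →
        Q.sort n = R.sort m ∧
        (∀ b₀ b₀', jN b₀ = some b₀' → (b₀ ∈ Q.boxes n ↔ b₀' ∈ R.boxes m ∧ b₀' ≠ b)) ∧
        (R.box m = some b → Q.box n = none) ∧
        (R.box m ≠ some b → (Q.box n).bind jN = R.box m))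

/-- The sync-commutation and sync-elimination steps. -/
def SyncRed (R Q : Struct) : Prop :=
  SyncMultStep R Q ∨ SyncAxStep R Q ∨ SyncCutStep R Q ∨ SyncElimStep R Q

/-- The reduction relation `→` on SMLL structures (applied at depth 0 only). -/
def Step (R Q : Struct) : Prop :=
  AxCutStep R Q ∨ TensParrStep R Q ∨ SyncRed R Q ∨ OneBotStep R Q

/-- Isomorphism of structures. -/
def Isom (R Q : Struct) : Prop :=
  ∃ (en : R.Node ≃ Q.Node) (ee : R.Edge ≃ Q.Edge),
    (∀ e, Q.typ (ee e) = R.typ e) ∧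
    (∀ e, Q.src (ee e) = en (R.src e)) ∧
    (∀ e, Q.tgt (ee e) = (R.tgt e).map en) ∧
    (∀ e, Q.pIdx (ee e) = R.pIdx e) ∧
    (∀ e, Q.cIdx (ee e) = R.cIdx e) ∧
    (∀ n, Q.sort (en n) = R.sort n) ∧
    (∀ n, Q.box (en n) = (R.box n).map en) ∧
    (∀ n, Q.boxes (en n) = (R.boxes n).image en)

/-! ## The SIAM: a synchronous interaction abstract machine -/

namespace Struct

variable (S : Struct)

/-- The value of a token: either an occurrence of an atom on an edge, or a
position `(e, i)` on the lock `e` of a box (`BOTBOX`). -/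
inductive PosVal (S : Struct) : Type
  | atom : S.Edge → Formula.Addr → PosVal S
  | lock : S.Edge → ℕ → PosVal S

/-- Initial positions: negative atom occurrences in the conclusions. -/
def InitPos (p : S.Edge × Formula.Addr) : Prop :=
  S.tgt p.1 = none ∧ Formula.NegOcc (S.typ p.1) p.2

/-- Final positions: positive atom occurrences in the conclusions. -/
def FinPos (p : S.Edge × Formula.Addr) : Prop :=
  S.tgt p.1 = none ∧ Formula.PosOcc (S.typ p.1) p.2

/-- One positions: conclusions of `one`-links. -/
def OnePos (p : S.Edge × Formula.Addr) : Prop :=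
  S.sort (S.src p.1) = .one ∧ p.2 = []

/-- Valid token values: genuine atom occurrences, or positions on the lock of
a box. -/
def ValidVal : PosVal S → Prop
  | .atom e m => Formula.AtomOcc (S.typ e) m
  | .lock e _ => S.sort (S.src e) = .bot

end Struct

/-- A state of the SIAM machine `M_S`: a (partial) function from
`INIT(S) ∪ L` (with `L ⊆ ONES(S)`) to the positions of `S`; it records, for
each token, its origin and its current position. -/
structure SState (S : Struct) where
  f : S.Edge × Formula.Addr → Option (Struct.PosVal S)
  dom_subset : ∀ p, f p ≠ none → S.InitPos p ∨ S.OnePos p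
  init_total : ∀ p, S.InitPos p → f p ≠ none
  val_valid : ∀ p v, f p = some v → S.ValidVal v

namespace Struct

variable (S : Struct)

/-- The box `b` is unlocked in state `T`: some token sits on its lock. -/
def Unlocked (T : SState S) (b : S.Node) : Prop :=
  ∃ p e i, T.f p = some (.lock e i) ∧ S.src e = b

/-- A link is active: all the boxes containing it are unlocked. -/
def Active (T : SState S) (n : S.Node) : Prop :=
  ∀ b ∈ S.boxes n, S.Unlocked T b

end Struct

open Classical in
/-- The initial state `I_S`: the identity on the initial positions. -/
noncomputable def initState (S : Struct) : SState S where
  f := fun p => if S.InitPos p then some (.atom p.1 p.2) else none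
  dom_subset := by
    intro p hp
    by_cases h : S.InitPos p
    · exact Or.inl h
    · simp [h] at hp
  init_total := by intro p hp; simp [hp]
  val_valid := by
    intro p v hv
    by_cases h : S.InitPos p
    · simp only [if_pos h, Option.some.injEq] at hv
      subst hv
      exact h.2.atomOcc
    · simp [h] at hv

/-- The transition relation of the SIAM.  Tokens on negative atom occurrences
move upwards, tokens on positive atom occurrences move downwards; all tokens
cross a sync link simultaneously, when each of its in-edges is saturated;
active `one`-links may spawn a token; a token reaching the lock of a box
unlocks it.  Tokens may only cross active links (so they can enter a box only
when it is unlocked). -/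
inductive STrans (S : Struct) : SState S → SState S → Prop
  | axUp {T T' : SState S} {p : S.Edge × Formula.Addr} {e e' : S.Edge}
      {m : Formula.Addr} {a : S.Node} :
      T.f p = some (.atom e m) →
      Formula.NegOcc (S.typ e) m →
      S.src e = a → S.sort a = .ax → S.Active T a →
      S.src e' = a → e' ≠ e →
      (∀ q, q ≠ p → T'.f q = T.f q) →
      T'.f p = some (.atom e' m) →
      STrans S T T'
  | cutDown {T T' : SState S} {p : S.Edge × Formula.Addr} {e e' : S.Edge}
      {m : Formula.Addr} {c : S.Node} :
      T.f p = some (.atom e m) →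
      Formula.PosOcc (S.typ e) m →
      S.tgt e = some c → S.sort c = .cut → S.Active T c →
      S.tgt e' = some c → e' ≠ e →
      (∀ q, q ≠ p → T'.f q = T.f q) →
      T'.f p = some (.atom e' m) →
      STrans S T T'
  | multDown {T T' : SState S} {p : S.Edge × Formula.Addr} {e g : S.Edge}
      {m : Formula.Addr} {n : S.Node} {b : Bool} :
      T.f p = some (.atom e m) →
      Formula.PosOcc (S.typ e) m →
      S.tgt e = some n → (S.sort n = .tens ∨ S.sort n = .parr) → S.Active T n →
      S.src g = n →
      S.pIdx e = (if b then 1 else 0) →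
      (∀ q, q ≠ p → T'.f q = T.f q) →
      T'.f p = some (.atom g (b :: m)) →
      STrans S T T'
  | multUp {T T' : SState S} {p : S.Edge × Formula.Addr} {e g : S.Edge}
      {m : Formula.Addr} {n : S.Node} {b : Bool} :
      T.f p = some (.atom g (b :: m)) →
      Formula.NegOcc (S.typ g) (b :: m) →
      S.src g = n → (S.sort n = .tens ∨ S.sort n = .parr) → S.Active T n →
      S.tgt e = some n →
      S.pIdx e = (if b then 1 else 0) →
      (∀ q, q ≠ p → T'.f q = T.f q) →
      T'.f p = some (.atom e m) →
      STrans S T T'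
  | lockTok {T T' : SState S} {p : S.Edge × Formula.Addr} {e : S.Edge}
      {b' : S.Node} :
      T.f p = some (.atom e []) →
      S.typ e = .bot →
      S.src e = b' → S.sort b' = .bot → S.Active T b' →
      (∀ q, q ≠ p → T'.f q = T.f q) →
      T'.f p = some (.lock e 0) →
      STrans S T T'
  | oneSpawn {T T' : SState S} {n : S.Node} {e : S.Edge} :
      S.sort n = .one → S.Active T n → S.src e = n →
      T.f (e, []) = none →
      (∀ q, q ≠ (e, []) → T'.f q = T.f q) →
      T'.f (e, []) = some (.atom e []) →
      STrans S T T'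
  | syncCross {T T' : SState S} {l : S.Node} :
      S.sort l = .sync → S.Active T l →
      (∃ q e m, T.f q = some (.atom e m) ∧
        ((S.tgt e = some l ∧ (S.typ e).Positive) ∨
         (S.src e = l ∧ (S.typ e).Negative))) →
      (∀ e, ((S.tgt e = some l ∧ (S.typ e).Positive) ∨
             (S.src e = l ∧ (S.typ e).Negative)) →
        ∀ m, Formula.AtomOcc (S.typ e) m → ∃ q, T.f q = some (.atom e m)) →
      (∀ q e m, T.f q = some (.atom e m) → S.tgt e = some l → (S.typ e).Positive →
        ∃ e', S.src e' = l ∧ S.cIdx e' = S.pIdx e ∧ T'.f q = some (.atom e' m)) →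
      (∀ q e m, T.f q = some (.atom e m) → S.src e = l → (S.typ e).Negative →
        ∃ e', S.tgt e' = some l ∧ S.pIdx e' = S.cIdx e ∧ T'.f q = some (.atom e' m)) →
      (∀ q, (∀ e m, T.f q = some (.atom e m) →
          ¬(S.tgt e = some l ∧ (S.typ e).Positive) ∧
          ¬(S.src e = l ∧ (S.typ e).Negative)) →
        T'.f q = T.f q) →
      STrans S T T'

/-- A final state: its image consists of all the final positions together
with positions on the locks of boxes. -/
def SState.Final {S : Struct} (T : SState S) : Prop :=
  (∀ q v, T.f q = some v →
    (∃ e m, v = .atom e m ∧ S.FinPos (e, m)) ∨ (∃ e i, v = .lock e i)) ∧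
  (∀ e m, S.FinPos (e, m) → ∃ q, T.f q = some (.atom e m))

/-- The machine of `S` deadlocks: some maximal transition sequence from the
initial state ends in a non-final state. -/
def Deadlocks (S : Struct) : Prop :=
  ∃ T : SState S, Relation.ReflTransGen (STrans S) (initState S) T ∧
    (∀ T', ¬ STrans S T T') ∧ ¬ T.Final

/-- The machine of `S` is deadlock free: every maximal transition sequence
from the initial state ends in a final state. -/
def DeadlockFree (S : Struct) : Prop :=
  ∀ T : SState S, Relation.ReflTransGen (STrans S) (initState S) T →
    (∀ T', ¬ STrans S T T') → T.Final

/-! ## The closure of a net -/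

/-- A structure with a designated (main) conclusion. -/
structure PNet : Type 1 where
  S : Struct
  main : S.Edge

/-- The net consisting of a single `one`-link. -/
def oneNet : PNet where
  S :=
    { Edge := Unit
      Node := Unit
      edgeFintype := inferInstance
      nodeFintype := inferInstance
      edgeDecEq := inferInstance
      nodeDecEq := inferInstance
      typ := fun _ => .one
      sort := fun _ => .one
      src := fun _ => ()
      tgt := fun _ => none
      pIdx := fun _ => 0
      cIdx := fun _ => 0
      box := fun _ => none
      boxes := fun _ => ∅ }
  main := ()

/-- The net consisting of a single axiom of conclusions `A⊥, A`, with main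
conclusion `A`. -/
def axNet (A : Formula) : PNet where
  S :=
    { Edge := Bool
      Node := Unit
      edgeFintype := inferInstance
      nodeFintype := inferInstance
      edgeDecEq := inferInstance
      nodeDecEq := inferInstance
      typ := fun e => if e then A else A.dual
      sort := fun _ => .ax
      src := fun _ => ()
      tgt := fun _ => none
      pIdx := fun _ => 0
      cIdx := fun e => if e then 1 else 0
      box := fun _ => none
      boxes := fun _ => ∅ }
  main := true

/-- Joining the main conclusions of two nets by a binary link of sort `s`
and conclusion type `C`. -/
def joinNet (s : LinkSort) (C : Formula) (P Q : PNet) : PNet where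
  S :=
    { Edge := Option (P.S.Edge ⊕ Q.S.Edge)
      Node := Option (P.S.Node ⊕ Q.S.Node)
      edgeFintype := inferInstance
      nodeFintype := inferInstance
      edgeDecEq := inferInstance
      nodeDecEq := inferInstance
      typ := fun e =>
        match e with
        | none => C
        | some (.inl x) => P.S.typ x
        | some (.inr y) => Q.S.typ y
      sort := fun n =>
        match n with
        | none => s
        | some (.inl x) => P.S.sort x
        | some (.inr y) => Q.S.sort y
      src := fun e =>
        match e with
        | none => none
        | some (.inl x) => some (.inl (P.S.src x))
        | some (.inr y) => some (.inr (Q.S.src y))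
      tgt := fun e =>
        match e with
        | none => none
        | some (.inl x) =>
            if x = P.main then some none
            else (P.S.tgt x).map fun n => some (.inl n)
        | some (.inr y) =>
            if y = Q.main then some none
            else (Q.S.tgt y).map fun n => some (.inr n)
      pIdx := fun e =>
        match e with
        | none => 0
        | some (.inl x) => if x = P.main then 0 else P.S.pIdx x
        | some (.inr y) => if y = Q.main then 1 else Q.S.pIdx y
      cIdx := fun e =>
        match e with
        | none => 0
        | some (.inl x) => P.S.cIdx x
        | some (.inr y) => Q.S.cIdx y
      box := fun n =>
        match n with
        | none => none
        | some (.inl x) => (P.S.box x).map fun m => some (.inl m)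
        | some (.inr y) => (Q.S.box y).map fun m => some (.inr m)
      boxes := fun n =>
        match n with
        | none => ∅
        | some (.inl x) => (P.S.boxes x).image fun m => some (.inl m)
        | some (.inr y) => (Q.S.boxes y).image fun m => some (.inr m) }
  main := none

/-- The net `R°(A)`, by induction on `A`: it has conclusions `Γ, A` with no
occurrence of `⊥` in `Γ`, and main conclusion `A`. -/
def circNet : Formula → PNet
  | .one => oneNet
  | .bot => axNet .bot
  | .var n => axNet (.var n)
  | .covar n => axNet (.covar n)
  | .tens A B => joinNet .tens (.tens A B) (circNet A) (circNet B)
  | .parr A B => joinNet .parr (.parr A B) (circNet A) (circNet B)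

/-- The conclusions of `R` containing an occurrence of `⊥`. -/
abbrev BadC (R : Struct) :=
  {e : R.Edge // R.tgt e = none ∧ (R.typ e).hasBotB = true}

/-- The closure `R̂` of `R`: each conclusion `A` of `R` containing `⊥` is cut
against the main conclusion of a copy of `R°(A⊥)`. -/
def netClosure (R : Struct) : Struct where
  Edge := R.Edge ⊕ Σ e : BadC R, (circNet (R.typ e.val).dual).S.Edge
  Node := R.Node ⊕ ((Σ e : BadC R, (circNet (R.typ e.val).dual).S.Node) ⊕ BadC R)
  edgeFintype := inferInstance
  nodeFintype := inferInstance
  edgeDecEq := inferInstance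
  nodeDecEq := inferInstance
  typ := fun e =>
    match e with
    | .inl e => R.typ e
    | .inr ⟨b, x⟩ => (circNet (R.typ b.val).dual).S.typ x
  sort := fun n =>
    match n with
    | .inl n => R.sort n
    | .inr (.inl ⟨b, x⟩) => (circNet (R.typ b.val).dual).S.sort x
    | .inr (.inr _) => .cut
  src := fun e =>
    match e with
    | .inl e => .inl (R.src e)
    | .inr ⟨b, x⟩ => .inr (.inl ⟨b, (circNet (R.typ b.val).dual).S.src x⟩)
  tgt := fun e =>
    match e with
    | .inl e =>
        if h : R.tgt e = none ∧ (R.typ e).hasBotB = true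
        then some (.inr (.inr ⟨e, h⟩))
        else (R.tgt e).map Sum.inl
    | .inr ⟨b, x⟩ =>
        if x = (circNet (R.typ b.val).dual).main
        then some (.inr (.inr b))
        else ((circNet (R.typ b.val).dual).S.tgt x).map fun n => .inr (.inl ⟨b, n⟩)
  pIdx := fun e =>
    match e with
    | .inl e => R.pIdx e
    | .inr ⟨b, x⟩ =>
        if x = (circNet (R.typ b.val).dual).main then 1
        else (circNet (R.typ b.val).dual).S.pIdx x
  cIdx := fun e =>
    match e with
    | .inl e => R.cIdx e
    | .inr ⟨b, x⟩ => (circNet (R.typ b.val).dual).S.cIdx x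
  box := fun n =>
    match n with
    | .inl n => (R.box n).map Sum.inl
    | .inr (.inl ⟨b, x⟩) =>
        ((circNet (R.typ b.val).dual).S.box x).map fun m => .inr (.inl ⟨b, m⟩)
    | .inr (.inr _) => none
  boxes := fun n =>
    match n with
    | .inl n => (R.boxes n).image Sum.inl
    | .inr (.inl ⟨b, x⟩) =>
        ((circNet (R.typ b.val).dual).S.boxes x).image fun m => .inr (.inl ⟨b, m⟩)
    | .inr (.inr _) => ∅

/-! Write `a → b` for a single polarized step. Shortcutting repeated links turns any
`→`-walk between distinct links into a simple one, so `≺` is the transitive closure of `→`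
with the diagonal removed, and transitivity amounts to `→` being acyclic. Shortcutting
likewise turns a closed `→`-walk into a simple cycle. Each step of it leaves its starting
link through whichever of its edges the switching conditions restrict: an out-edge of a
sync link, or a premiss of a `⅋`-link, which a polarized step can only traverse upwards.
Hence distinct steps use distinct such edges, and the cycle is a switching cycle of the
`0`-graph, which correctness forbids. -/

namespace Relation

variable {α : Type*} {r : α → α → Prop} {a b : α}

theorem ReflTransGen.exists_nodup_isChain [DecidableEq α] (h : ReflTransGen r a b) :
    ∃ l : List α, (a :: l).Nodup ∧ (a :: l).IsChain r ∧
      (a :: l).getLast (List.cons_ne_nil a l) = b := by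
  induction h using ReflTransGen.head_induction_on with
  | refl => exact ⟨[], by simp, by simp, rfl⟩
  | @head a c hac _ ih =>
    obtain ⟨l, hnd, hch, hlast⟩ := ih
    by_cases ha : a ∈ c :: l
    · obtain ⟨s, t, hst⟩ := List.append_of_mem ha
      rw [hst] at hnd hch
      refine ⟨t, hnd.sublist (List.sublist_append_right _ _), hch.right_of_append, ?_⟩
      rw [← hlast, List.getLast_congr _ (by simp) hst, List.getLast_append_of_ne_nil]
    · exact ⟨c :: l, List.nodup_cons.2 ⟨ha, hnd⟩, List.isChain_cons_cons.2 ⟨hac, hch⟩, hlast⟩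

theorem ReflTransGen.exists_injective_path [DecidableEq α] (h : ReflTransGen r a b) :
    ∃ (n : ℕ) (v : Fin (n + 1) → α), v 0 = a ∧ v (Fin.last n) = b ∧
      Function.Injective v ∧ ∀ i : Fin n, r (v i.castSucc) (v i.succ) := by
  obtain ⟨l, hnd, hch, hlast⟩ := h.exists_nodup_isChain
  refine ⟨l.length, fun i => (a :: l)[i.val], rfl, ?_, ?_, ?_⟩
  · simpa [List.getLast_eq_getElem] using hlast
  · exact fun i j hij => Fin.ext (hnd.getElem_inj_iff.1 hij)
  · exact fun i => List.isChain_iff_getElem.1 hch i.val (by simp)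

theorem TransGen.exists_injective_cycle [DecidableEq α] (h : TransGen r a a) :
    ∃ (n : ℕ) (v : Fin (n + 1) → α), Function.Injective v ∧ ∀ i, r (v i) (v (i + 1)) := by
  obtain ⟨c, hac, hca⟩ := TransGen.head'_iff.1 h
  obtain ⟨n, v, hv0, hvn, hinj, hstep⟩ := hca.exists_injective_path
  refine ⟨n, v, hinj, fun i => ?_⟩
  cases i using Fin.lastCases with
  | last => rwa [Fin.last_add_one, hvn, hv0]
  | cast j => rw [Fin.coeSucc_eq_succ]; exact hstep j

theorem TransGen.of_path {n : ℕ} {v : Fin (n + 2) → α}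
    (hstep : ∀ i : Fin (n + 1), r (v i.castSucc) (v i.succ)) :
    TransGen r (v 0) (v (Fin.last _)) := by
  have h : ∀ i : Fin (n + 1), TransGen r (v 0) (v i.succ) := fun i => by
    induction i using Fin.induction with
    | zero => exact .single (hstep 0)
    | succ i ih => exact ih.tail (Fin.succ_castSucc i ▸ hstep i.succ)
  exact Fin.succ_last n ▸ h (Fin.last n)

end Relation

namespace Formula

theorem Positive.not_negative {A : Formula} (hp : A.Positive) : ¬ A.Negative := by
  intro hn
  cases hp <;> cases hn

theorem not_positive_parr {A B : Formula} : ¬ (parr A B).Positive := nofun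

theorem Negative.of_parr {A B : Formula} (h : (Formula.parr A B).Negative) :
    A.Negative ∧ B.Negative := by
  cases h with
  | parr hA hB => exact ⟨hA, hB⟩

end Formula

namespace Struct

def PolAdj (S : Struct) (a b : S.Node) : Prop := ∃ e, S.PolStep e a b

variable {S : Struct}

namespace PolStep

variable {e : S.Edge} {a b : S.Node}

theorem source_unique {a' b' : S.Node} (h : S.PolStep e a b) (h' : S.PolStep e a' b') :
    a = a' := by
  obtain ⟨-, -, -, -, ⟨hp, hs, -⟩ | ⟨hn, ht, -⟩⟩ := h <;>
    obtain ⟨-, -, -, -, ⟨hp', hs', -⟩ | ⟨hn', ht', -⟩⟩ := h'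
  · exact hs.symm.trans hs'
  · exact absurd hn' hp.not_negative
  · exact absurd hn hp'.not_negative
  · exact Option.some_inj.1 (ht.symm.trans ht')

theorem connectsAt_none (h : S.PolStep e a b) : S.ConnectsAt none e a b := by
  obtain ⟨ha, hb, -, -, ⟨-, hs, ht⟩ | ⟨-, ht, hs⟩⟩ := h
  · exact ⟨b, ht, .inl hb, .inl ⟨.inl ⟨hs ▸ ha, hs.symm⟩, .inl ⟨hb, rfl⟩⟩⟩
  · exact ⟨a, ht, .inl ha, .inr ⟨.inl ⟨hs ▸ hb, hs.symm⟩, .inl ⟨ha, rfl⟩⟩⟩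

/-- The conclusion of a polarized `⅋`-link is negative, hence so are its premisses, and a
polarized step along one of them goes upwards, out of the `⅋`-link. -/
theorem eq_of_tgt_eq_parr (hWF : S.WF) (h : S.PolStep e a b) {p : S.Node}
    (hp : S.sort p = .parr) (ht : S.tgt e = some p) : a = p := by
  obtain ⟨-, -, -, hpol, ⟨hpos, -, ht'⟩ | ⟨-, ht', -⟩⟩ := h
  · obtain rfl : b = p := Option.some_inj.1 (ht'.symm.trans ht)
    obtain ⟨e₁, e₂, g, -, hprems, -, -, hconcls, hg⟩ := hWF.2.2.2.1 b hp
    have hneg : (S.typ g).Negative :=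
      (hpol g (by simp [hconcls])).resolve_left (hg ▸ Formula.not_positive_parr)
    have he : e ∈ S.prems b := by simp [prems, ht]
    rw [hg] at hneg
    rw [hprems, Finset.mem_insert, Finset.mem_singleton] at he
    rcases he with rfl | rfl
    exacts [absurd hneg.of_parr.1 hpos.not_negative, absurd hneg.of_parr.2 hpos.not_negative]
  · exact Option.some_inj.1 (ht'.symm.trans ht)

theorem eq_of_outEdgeOf (h : S.PolStep e a b) {l : S.Node} (ho : S.OutEdgeOf l e) : a = l := by
  obtain ⟨-, -, -, -, ⟨hpos, hs, -⟩ | ⟨hneg, ht, -⟩⟩ := h <;>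
    obtain ⟨-, ⟨hs', hpos'⟩ | ⟨ht', hneg'⟩⟩ := ho
  · exact hs.symm.trans hs'
  · exact absurd hneg' hpos.not_negative
  · exact absurd hneg hpos'.not_negative
  · exact Option.some_inj.1 (ht.symm.trans ht')

end PolStep

theorem switchingCycleAt_none_of_polStep (hWF : S.WF) {k : ℕ} {v : Fin (k + 1) → S.Node}
    {e : Fin (k + 1) → S.Edge} (hv : Function.Injective v)
    (hstep : ∀ i, S.PolStep (e i) (v i) (v (i + 1))) : S.SwitchingCycleAt none := by
  refine ⟨k, v, e, hv, fun i j hij => hv ?_, fun i => (hstep i).connectsAt_none, ?_, ?_⟩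
  · exact (hstep i).source_unique (hij ▸ hstep j)
  · intro p hp i hi j hj
    exact hv (((hstep i).eq_of_tgt_eq_parr hWF hp hi).trans
      ((hstep j).eq_of_tgt_eq_parr hWF hp hj).symm)
  · intro l _ i hi j hj
    exact hv (((hstep i).eq_of_outEdgeOf hi).trans ((hstep j).eq_of_outEdgeOf hj).symm)

theorem prec_iff {a b : S.Node} : S.prec a b ↔ a ≠ b ∧ Relation.TransGen S.PolAdj a b := by
  constructor
  · rintro ⟨k, v, e, rfl, rfl, hv, -, hstep⟩
    exact ⟨fun h => Fin.last_pos.ne (hv h), Relation.TransGen.of_path fun i => ⟨e i, hstep i⟩⟩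
  · rintro ⟨hab, h⟩
    obtain ⟨n, v, rfl, rfl, hv, hstep⟩ := h.to_reflTransGen.exists_injective_path
    obtain ⟨k, rfl⟩ : ∃ k, n = k + 1 :=
      Nat.exists_eq_succ_of_ne_zero fun hn => hab (by subst hn; rfl)
    choose e he using hstep
    exact ⟨k, v, e, rfl, rfl, hv,
      fun i j hij => Fin.castSucc_injective _ (hv ((he i).source_unique (hij ▸ he j))), he⟩

theorem not_transGen_polAdj_self (hWF : S.WF) (hC : S.Correct) (a : S.Node) :
    ¬ Relation.TransGen S.PolAdj a a := fun h => by
  obtain ⟨k, v, hv, hstep⟩ := h.exists_injective_cycle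
  choose e he using hstep
  exact hC none (switchingCycleAt_none_of_polStep hWF hv he)

end Struct

/-- **Links Strict Order** (Lemma 1 of "The Geometry of Synchronization").
For an SMLL net `R`, the set of its links equipped with the relation `≺`
(`a ≺ b` iff there is a polarized path from `a` to `b`, i.e. a path of
polarized edges connecting polarized nodes, going upwards on negative edges
and downwards on positive edges, and not entering any box) is a finite strict
partial order: the set of links is finite and `≺` is transitive and
irreflexive. -/
theorem smll_links_strict_partial_order (R : Struct) (hWF : R.WF) (hC : R.Correct) :
    Finite R.Node ∧
    (∀ a b c : R.Node, R.prec a b → R.prec b c → R.prec a c) ∧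
    (∀ a : R.Node, ¬ R.prec a a) := by
  refine ⟨Finite.of_fintype _, fun a b c hab hbc => ?_, fun a h => (Struct.prec_iff.1 h).1 rfl⟩
  obtain ⟨-, hab⟩ := Struct.prec_iff.1 hab
  obtain ⟨-, hbc⟩ := Struct.prec_iff.1 hbc
  refine Struct.prec_iff.2 ⟨?_, hab.trans hbc⟩
  rintro rfl
  exact R.not_transGen_polAdj_self hWF hC a (hab.trans hbc)
end

section
/- Let R be an SMLL net. If R contains a ready cut — a cut link at depth 0 neither of whose premisses is a hereditary conclusion of a box — then R is not a normal form for the reduction relation →. -/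
/-! Let `e`, `f` be the premisses of the ready cut.  Being ready, neither is the lock of a box nor
comes out of one, so each is the conclusion of an axiom, of a `1`-, `⊗`- or `⅋`-link, or of a sync
link.  An axiom gives an `ax/cut` step, a negative sync conclusion a sync/cut commutation, and a
`⊗`-link facing a `⅋`-link a `⊗/⅋` step; by duality of the types this leaves a single case: a
positive `⊗`-formula coming out of a sync link.  Climbing the sync path above it we reach an axiom
or a `⊗`-link, where a sync/ax or sync/`⊗` commutation applies.  The climb stops because a closed
chain of depth-`0` sync links would be a switching cycle. -/

theorem Formula.Positive.not_negative_s4 {A : Formula} (hp : A.Positive) : ¬ A.Negative := by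
  cases hp <;> rintro ⟨⟩

theorem Formula.Positive.eq_one_or_tens {A : Formula} (h : A.Positive) :
    A = .one ∨ ∃ B C, A = .tens B C := by
  cases h <;> simp

theorem Function.exists_iterate_mem_periodicPts {α : Type*} [Finite α] (f : α → α) (x : α) :
    ∃ m, f^[m] x ∈ Function.periodicPts f := by
  obtain ⟨a, b, hab, he⟩ := Finite.exists_ne_map_eq_of_infinite (fun n : ℕ => f^[n] x)
  wlog h : a < b generalizing a b
  · exact this b a hab.symm he.symm (by omega)
  refine ⟨a, b - a, by omega, ?_⟩
  change f^[b - a] (f^[a] x) = f^[a] x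
  rw [← Function.iterate_add_apply, Nat.sub_add_cancel h.le]
  exact he.symm

theorem pInjOnto_subtype_val {β : Type*} (p : β → Prop) :
    PInjOnto (fun x : Subtype p => some x.1) {b | p b} :=
  ⟨fun _ _ _ h h' => Subtype.ext (Option.some_inj.1 (h.trans h'.symm)),
    fun a _ h => Option.some_inj.1 h ▸ a.2, fun b hb => ⟨⟨b, hb⟩, rfl⟩⟩

theorem pInjOnto_some_univ (β : Type*) : PInjOnto (some : β → Option β) Set.univ :=
  ⟨fun _ _ _ h h' => Option.some_inj.1 (h.trans h'.symm), fun _ _ _ => trivial,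
    fun b _ => ⟨b, rfl⟩⟩

theorem pInjOnto_map_subtype_val {β : Type*} (p : β → Prop) :
    PInjOnto (fun x : Option (Subtype p) => x.map Subtype.val) {b | p b} := by
  refine ⟨?_, ?_, fun b hb => ⟨some ⟨b, hb⟩, rfl⟩⟩
  · rintro (_ | a) (_ | a') b h h' <;> simp_all [Subtype.ext_iff]
  · rintro (_ | a) b h
    · simp at h
    · exact Option.some_inj.1 h ▸ a.2

namespace Struct

variable {R : Struct}

theorem mem_prems {n : R.Node} {e : R.Edge} : e ∈ R.prems n ↔ R.tgt e = some n := by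
  simp [prems]

theorem mem_concls {n : R.Node} {e : R.Edge} : e ∈ R.concls n ↔ R.src e = n := by
  simp [concls]

theorem eq_of_concls_eq_singleton {g e : R.Edge} (h : R.concls (R.src g) = {e}) : g = e :=
  Finset.mem_singleton.1 (h ▸ mem_concls.2 rfl)

theorem exists_idx_bound (R : Struct) : ∃ N, ∀ e : R.Edge, R.pIdx e < N ∧ R.cIdx e < N :=
  ⟨Finset.univ.sup (fun e => max (R.pIdx e) (R.cIdx e)) + 1, fun e => by
    have := Finset.le_sup (f := fun e => max (R.pIdx e) (R.cIdx e)) (Finset.mem_univ e)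
    omega⟩

namespace WF

theorem ax (h : R.WF) {n : R.Node} (hn : R.sort n = .ax) : R.prems n = ∅ ∧
    ∃ e f, e ≠ f ∧ R.concls n = {e, f} ∧ R.typ f = (R.typ e).dual :=
  h.1 n hn

theorem cut (h : R.WF) {n : R.Node} (hn : R.sort n = .cut) : R.concls n = ∅ ∧
    ∃ e f, e ≠ f ∧ R.prems n = {e, f} ∧ R.typ f = (R.typ e).dual :=
  h.2.1 n hn

theorem tens (h : R.WF) {n : R.Node} (hn : R.sort n = .tens) : ∃ e f g, e ≠ f ∧
    R.prems n = {e, f} ∧ R.pIdx e = 0 ∧ R.pIdx f = 1 ∧ R.concls n = {g} ∧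
    R.typ g = .tens (R.typ e) (R.typ f) :=
  h.2.2.1 n hn

theorem parr (h : R.WF) {n : R.Node} (hn : R.sort n = .parr) : ∃ e f g, e ≠ f ∧
    R.prems n = {e, f} ∧ R.pIdx e = 0 ∧ R.pIdx f = 1 ∧ R.concls n = {g} ∧
    R.typ g = .parr (R.typ e) (R.typ f) :=
  h.2.2.2.1 n hn

theorem one (h : R.WF) {n : R.Node} (hn : R.sort n = .one) :
    R.prems n = ∅ ∧ ∃ e, R.concls n = {e} ∧ R.typ e = .one :=
  h.2.2.2.2.1 n hn

theorem sync (h : R.WF) {n : R.Node} (hn : R.sort n = .sync) :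
    (∀ e ∈ R.prems n, (R.typ e).Polarized) ∧
    (∀ e ∈ R.prems n, ∃! f, f ∈ R.concls n ∧ R.cIdx f = R.pIdx e) ∧
    (∀ f ∈ R.concls n, ∃! e, e ∈ R.prems n ∧ R.pIdx e = R.cIdx f) ∧
    (∀ e ∈ R.prems n, ∀ f ∈ R.concls n, R.cIdx f = R.pIdx e → R.typ f = R.typ e) :=
  h.2.2.2.2.2.2.1 n hn

theorem sort_eq_bot_of_box_eq (h : R.WF) {n b : R.Node} (hb : R.box n = some b) :
    R.sort b = .bot :=
  h.2.2.2.2.2.2.2.1 n b <| (h.2.2.2.2.2.2.2.2.2.1 n b hb).2 ▸ Finset.mem_insert_self _ _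

theorem src_ne_of_sort_eq_cut (h : R.WF) {n : R.Node} (hn : R.sort n = .cut) (e : R.Edge) :
    R.src e ≠ n := fun he => by
  simpa [(h.cut hn).1] using mem_concls.2 he

theorem exists_prem_of_sort_src_eq_sync (h : R.WF) {g : R.Edge}
    (hg : R.sort (R.src g) = .sync) :
    ∃ g', R.tgt g' = some (R.src g) ∧ R.pIdx g' = R.cIdx g ∧ R.typ g' = R.typ g := by
  obtain ⟨-, -, hconcl, htyp⟩ := h.sync hg
  obtain ⟨g', ⟨hg', hidx⟩, -⟩ := hconcl g (mem_concls.2 rfl)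
  exact ⟨g', mem_prems.1 hg', hidx, (htyp g' hg' g (mem_concls.2 rfl) hidx.symm).symm⟩

theorem src_cases (h : R.WF) (g : R.Edge) :
    R.sort (R.src g) = .ax ∨ R.sort (R.src g) = .bot ∨
    (R.sort (R.src g) = .one ∧ R.typ g = .one) ∨
    (R.sort (R.src g) = .tens ∧ ∃ A B, R.typ g = .tens A B) ∨
    (R.sort (R.src g) = .parr ∧ ∃ A B, R.typ g = .parr A B) ∨
    (R.sort (R.src g) = .sync ∧ (R.typ g).Polarized) := by
  cases hs : R.sort (R.src g)
  case ax | bot => simp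
  case cut => exact absurd rfl (h.src_ne_of_sort_eq_cut hs g)
  case one =>
    obtain ⟨-, e, hc, he⟩ := h.one hs
    simp [eq_of_concls_eq_singleton hc, he]
  case tens =>
    obtain ⟨_, _, e, -, -, -, -, hc, he⟩ := h.tens hs
    simp [eq_of_concls_eq_singleton hc, he]
  case parr =>
    obtain ⟨_, _, e, -, -, -, -, hc, he⟩ := h.parr hs
    simp [eq_of_concls_eq_singleton hc, he]
  case sync =>
    obtain ⟨g', hg', -, htyp⟩ := h.exists_prem_of_sort_src_eq_sync hs
    simpa [← htyp] using (h.sync hs).1 g' (mem_prems.2 hg')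

end WF

theorem HereditaryBoxConcl.of_syncStepE {g g' : R.Edge} (h : R.HereditaryBoxConcl g')
    (hs : R.SyncStepE g' g) : R.HereditaryBoxConcl g :=
  let ⟨f, hf, hp⟩ := h
  ⟨f, hf, hp.tail hs⟩

theorem src_of_not_hereditaryBoxConcl {g : R.Edge} (h : ¬ R.HereditaryBoxConcl g) :
    R.sort (R.src g) ≠ .bot ∧ R.box (R.src g) = none := by
  simpa [FromBox, not_or] using fun hb : R.FromBox g => h ⟨g, hb, .refl⟩

theorem connectsAt_none {e : R.Edge} {t : R.Node} (ht : R.tgt e = some t)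
    (hs : R.box (R.src e) = none) (hb : R.box t = none) : R.ConnectsAt none e (R.src e) t :=
  ⟨t, ht, Or.inl hb, Or.inl ⟨Or.inl ⟨hs, rfl⟩, Or.inl ⟨hb, rfl⟩⟩⟩

theorem ConnectsAt.symm {ℓ : Option R.Node} {e : R.Edge} {u v : R.Node}
    (h : R.ConnectsAt ℓ e u v) : R.ConnectsAt ℓ e v u :=
  let ⟨t, ht, hb, hr⟩ := h
  ⟨t, ht, hb, hr.symm⟩

theorem Correct.false_of_two_cycle (hC : R.Correct) {l m : R.Node} {e₁ e₂ : R.Edge}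
    (hlm : l ≠ m) (h12 : e₁ ≠ e₂)
    (c₁ : R.ConnectsAt none e₁ l m) (c₂ : R.ConnectsAt none e₂ m l)
    (hp : ∀ p, R.sort p = .parr → R.tgt e₁ = some p → R.tgt e₂ ≠ some p)
    (hs : ∀ s, R.sort s = .sync → R.OutEdgeOf s e₁ → ¬ R.OutEdgeOf s e₂) : False := by
  refine hC none ⟨1, ![l, m], ![e₁, e₂], ?_, ?_, ?_, ?_, ?_⟩
  · intro i j h
    fin_cases i <;> fin_cases j <;> simp_all
  · intro i j h
    fin_cases i <;> fin_cases j <;> simp_all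
  · intro i
    fin_cases i <;> simpa
  · intro p hpp i hi j hj
    fin_cases i <;> fin_cases j <;> simp_all
  · intro s hss i hi j hj
    fin_cases i <;> fin_cases j <;> simp_all

/-- Following positive premisses inside `S` must revisit a link, and the cycle so obtained is a
switching one: each of its links is left along a single edge, a positive conclusion. -/
theorem Correct.eq_empty_of_sync_chain (hC : R.Correct) {S : Set R.Node}
    (hS : ∀ l ∈ S, R.sort l = .sync ∧ R.box l = none ∧
      ∃ g, R.tgt g = some l ∧ (R.typ g).Positive ∧ R.src g ∈ S) : S = ∅ := by
  by_contra hne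
  obtain ⟨l₀, hl₀⟩ := Set.nonempty_iff_ne_empty.2 hne
  have : Nonempty R.Edge := let ⟨g, _⟩ := (hS l₀ hl₀).2.2; ⟨g⟩
  choose! up hup using fun l hl => (hS l hl).2.2
  set next : R.Node → R.Node := fun l => R.src (up l)
  have hmaps : Set.MapsTo next S S := fun l hl => (hup l hl).2.2
  obtain ⟨m, hper⟩ := Function.exists_iterate_mem_periodicPts next l₀
  set x := next^[m] l₀
  obtain ⟨k, hk⟩ : ∃ k, Function.minimalPeriod next x = k + 1 :=
    Nat.exists_eq_succ_of_ne_zero (Function.minimalPeriod_pos_of_mem_periodicPts hper).ne'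
  set v : Fin (k + 1) → R.Node := fun i => next^[i] x
  have hvS (i : Fin (k + 1)) : v i ∈ S := (hmaps.iterate _) ((hmaps.iterate m) hl₀)
  have hlt (i : Fin (k + 1)) : (i : ℕ) ∈ Set.Iio (Function.minimalPeriod next x) := by
    simp [hk]; omega
  have hv : Function.Injective v := fun i j h =>
    Fin.ext (Function.iterate_injOn_Iio_minimalPeriod (hlt i) (hlt j) h)
  have hv_succ (i : Fin (k + 1)) : v (i + 1) = next (v i) := by
    simp only [v, Fin.val_add, Fin.val_one', Nat.add_mod_mod, ← Function.iterate_succ_apply']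
    conv_rhs => rw [← Function.iterate_mod_minimalPeriod_eq, hk]
  have hup_tgt (i : Fin (k + 1)) : R.tgt (up (v i)) = some (v i) := (hup _ (hvS i)).1
  refine hC none ⟨k, v, fun i => up (v i), hv, fun i j h => hv ?_, fun i => ?_, ?_, ?_⟩
  · have h : up (v i) = up (v j) := h
    exact Option.some_inj.1 ((hup_tgt i).symm.trans (h ▸ hup_tgt j))
  · rw [hv_succ]
    exact (connectsAt_none (hup_tgt i) (hS _ (hmaps (hvS i))).2.1 (hS _ (hvS i)).2.1).symm
  · intro p hp i (hi : R.tgt (up (v i)) = some p)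
    rw [hup_tgt, Option.some_inj] at hi
    simp [← hi, (hS _ (hvS i)).1] at hp
  · intro l _ i hi j hj
    have hsrc {i : Fin (k + 1)} (hi : R.OutEdgeOf l (up (v i))) : v (i + 1) = l := by
      obtain ⟨-, ⟨h, -⟩ | ⟨-, h⟩⟩ := hi
      · exact (hv_succ i).trans h
      · exact absurd h (hup _ (hvS i)).2.1.not_negative_s4
    exact add_right_cancel (hv ((hsrc hi).trans (hsrc hj).symm))

theorem WF.exists_axCutStep_of_ne (hWF : R.WF) {a c : R.Node} {v u q : R.Edge}
    (sa : R.sort a = .ax) (sc : R.sort c = .cut) (ba : R.box a = none) (bc : R.box c = none)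
    (vu : v ≠ u) (vq : v ≠ q) (uq : u ≠ q) (ca : R.concls a = {v, u})
    (pc : R.prems c = {v, q}) : ∃ Q, AxCutStep R Q := by
  classical
  have hsrc (x : R.Edge) (hx : x ≠ v ∧ x ≠ u) : R.src x ≠ a ∧ R.src x ≠ c := by
    refine ⟨fun h => ?_, hWF.src_ne_of_sort_eq_cut sc x⟩
    have h := mem_concls.2 h
    simp [ca, hx.1, hx.2] at h
  have htgt (x : R.Edge) (hx : x ≠ v) (n : R.Node) (hn : R.tgt x = some n) :
      x = q ∨ (n ≠ a ∧ n ≠ c) := by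
    refine or_iff_not_imp_left.2 fun hq => ⟨fun h => ?_, fun h => ?_⟩
    · have h := mem_prems.2 (h ▸ hn)
      simp [(hWF.ax sa).1] at h
    · have h := mem_prems.2 (h ▸ hn)
      simp [pc, hx, hq] at h
  have htgt_u (n : R.Node) (hn : R.tgt u = some n) : n ≠ a ∧ n ≠ c :=
    (htgt u vu.symm n hn).resolve_left uq
  have hbox (n b : R.Node) (hb : R.box n = some b) : b ≠ a ∧ b ≠ c := by
    have := hWF.sort_eq_bot_of_box_eq hb
    exact ⟨by rintro rfl; simp [sa] at this, by rintro rfl; simp [sc] at this⟩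
  refine ⟨{
      Edge := {x : R.Edge // x ≠ v ∧ x ≠ u}
      Node := {n : R.Node // n ≠ a ∧ n ≠ c}
      edgeFintype := inferInstance
      nodeFintype := inferInstance
      edgeDecEq := inferInstance
      nodeDecEq := inferInstance
      typ := fun x => R.typ x.1
      sort := fun n => R.sort n.1
      src := fun x => ⟨R.src x.1, hsrc x.1 x.2⟩
      tgt := fun x =>
        if hq : x.1 = q then (R.tgt u).attachWith _ htgt_u
        else (R.tgt x.1).attachWith _ fun n hn => (htgt x.1 x.2.1 n hn).resolve_left hq
      pIdx := fun x => if x.1 = q then R.pIdx u else R.pIdx x.1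
      cIdx := fun x => R.cIdx x.1
      box := fun n => (R.box n.1).attachWith _ (hbox n.1)
      boxes := fun n => Finset.univ.filter (fun b => b.1 ∈ R.boxes n.1) }, a, c, v, u, q,
    sa, sc, ba, bc, vu, vq, uq, ca, pc, fun n => some n.1, fun x => some x.1,
    fun _ => Option.some_ne_none _, fun _ => Option.some_ne_none _,
    pInjOnto_subtype_val _, pInjOnto_subtype_val _, ⟨?_, ?_⟩, ?_⟩
  · rintro x y ⟨⟩ hy
    have hq : x.1 ≠ q := by simpa using hy
    simp [hq]
  · rintro n m ⟨⟩ -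
    simp
  · intro x hx
    rw [Option.some_inj] at hx
    simp [hx]

theorem WF.exists_concls_eq_pair_of_ax (hWF : R.WF) {g : R.Edge}
    (hax : R.sort (R.src g) = .ax) : ∃ u, R.concls (R.src g) = {g, u} ∧ g ≠ u := by
  obtain ⟨-, e, f, hef, hc, -⟩ := hWF.ax hax
  have hg := mem_concls.2 (rfl : R.src g = R.src g)
  rw [hc, Finset.mem_insert, Finset.mem_singleton] at hg
  rcases hg with rfl | rfl
  · exact ⟨f, hc, hef⟩
  · exact ⟨e, hc.trans (Finset.pair_comm _ _), hef.symm⟩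

/-- The axiom's other conclusion cannot be the cut's other premiss: axiom and cut would then form
a switching cycle of length two. -/
theorem WF.exists_axCutStep (hWF : R.WF) (hC : R.Correct) {c : R.Node} {e f : R.Edge}
    (sc : R.sort c = .cut) (bc : R.box c = none) (hef : e ≠ f) (pc : R.prems c = {e, f})
    (hax : R.sort (R.src e) = .ax) (hba : R.box (R.src e) = none) : ∃ Q, AxCutStep R Q := by
  obtain ⟨u, hca, heu⟩ := hWF.exists_concls_eq_pair_of_ax hax
  refine hWF.exists_axCutStep_of_ne hax sc hba bc heu hef ?_ hca pc
  rintro rfl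
  have hsu : R.src u = R.src e := mem_concls.1 (by simp [hca])
  have hte : R.tgt e = some c := mem_prems.1 (by simp [pc])
  have htu : R.tgt u = some c := mem_prems.1 (by simp [pc])
  have hac : R.src e ≠ c := fun h => by simp [h, sc] at hax
  refine hC.false_of_two_cycle hac heu (connectsAt_none hte hba bc)
    (hsu ▸ connectsAt_none htu (hsu ▸ hba) bc).symm ?_ ?_
  · intro p hp hp'
    simp_all
  · rintro s hs ⟨-, ⟨h, -⟩ | ⟨h, -⟩⟩ -
    · simp_all
    · simp_all

theorem WF.exists_syncCutStep (hWF : R.WF) {c : R.Node} {d' q : R.Edge}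
    (sc : R.sort c = .cut) (bc : R.box c = none) (hd'q : d' ≠ q) (pc : R.prems c = {d', q})
    (hneg : (R.typ d').Negative) (sl : R.sort (R.src d') = .sync)
    (bl : R.box (R.src d') = none) : ∃ Q, SyncCutStep R Q := by
  classical
  set l := R.src d'
  obtain ⟨d, htd, hpd, -⟩ := hWF.exists_prem_of_sort_src_eq_sync sl
  obtain ⟨j, hj⟩ := R.exists_idx_bound
  have htd' : R.tgt d' = some c := mem_prems.1 (by simp [pc])
  have htq : R.tgt q = some c := mem_prems.1 (by simp [pc])
  have hlc : l ≠ c := fun h => by simp [l, h, sc] at sl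
  have hdq : d ≠ q := by rintro rfl; exact hlc (Option.some_inj.1 (htd.symm.trans htq))
  have hdd' : d ≠ d' := by rintro rfl; exact hlc (Option.some_inj.1 (htd.symm.trans htd'))
  refine ⟨{
      Edge := Option {e : R.Edge // e ≠ d'}
      Node := R.Node
      edgeFintype := inferInstance
      nodeFintype := inferInstance
      edgeDecEq := inferInstance
      nodeDecEq := inferInstance
      typ := fun x => match x with | none => R.typ q | some e => R.typ e.1
      sort := R.sort
      src := fun x => match x with | none => l | some e => R.src e.1
      tgt := fun x => match x with
        | none => some c
        | some e => if e.1 = d then some c else if e.1 = q then some l else R.tgt e.1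
      pIdx := fun x => match x with
        | none => R.pIdx q
        | some e => if e.1 = d then R.pIdx d' else if e.1 = q then j else R.pIdx e.1
      cIdx := fun x => match x with | none => j | some e => R.cIdx e.1
      box := R.box
      boxes := R.boxes }, l, c, d, d', q, j, sl, sc, bl, bc, hneg, rfl, htd', htd, hpd,
    hd'q, hdq, hdd', pc, fun e _ => (hj e).1.ne, fun e _ => (hj e).2.ne,
    some, fun x => x.map (·.1), l, c, none, fun _ => Option.some_ne_none _, ?_, ?_,
    rfl, rfl, rfl, ?_, ⟨?_, ?_⟩, ?_, ?_, ?_⟩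
  · exact pInjOnto_some_univ _
  · exact pInjOnto_map_subtype_val _
  · rintro (_ | e) h <;> simp_all
  · rintro (_ | e) y h hy <;> simp_all
  · rintro n m ⟨⟩ -
    simp
  · rintro (_ | e) h <;> simp_all
  · rintro (_ | e) h <;> simp_all [hdq.symm]
  · simp

theorem WF.exists_syncAxStep (hWF : R.WF) {g g' : R.Edge} (sl : R.sort (R.src g) = .sync)
    (bl : R.box (R.src g) = none) (htg' : R.tgt g' = some (R.src g))
    (hpg' : R.pIdx g' = R.cIdx g) (hpos : (R.typ g').Positive)
    (sa : R.sort (R.src g') = .ax) (ba : R.box (R.src g') = none) (hne : R.src g' ≠ R.src g) :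
    ∃ Q, SyncAxStep R Q := by
  classical
  obtain ⟨v, hca, hg'v⟩ := hWF.exists_concls_eq_pair_of_ax sa
  obtain ⟨j, hj⟩ := R.exists_idx_bound
  have hsv : R.src v = R.src g' := mem_concls.1 (by simp [hca])
  have hgg' : g ≠ g' := fun h => hne (by rw [h])
  have hgv : g ≠ v := fun h => hne (by rw [← hsv, h])
  refine ⟨{
      Edge := Option {e : R.Edge // e ≠ g'}
      Node := R.Node
      edgeFintype := inferInstance
      nodeFintype := inferInstance
      edgeDecEq := inferInstance
      nodeDecEq := inferInstance
      typ := fun x => match x with | none => R.typ v | some e => R.typ e.1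
      sort := R.sort
      src := fun x => match x with
        | none => R.src g
        | some e => if e.1 = g then R.src g' else R.src e.1
      tgt := fun x => match x with
        | none => R.tgt v
        | some e => if e.1 = v then some (R.src g) else R.tgt e.1
      pIdx := fun x => match x with
        | none => R.pIdx v
        | some e => if e.1 = v then j else R.pIdx e.1
      cIdx := fun x => match x with
        | none => j
        | some e => if e.1 = g then R.cIdx g' else R.cIdx e.1
      box := R.box
      boxes := R.boxes }, R.src g, R.src g', g', g, v, j, sl, sa, bl, ba, hpos, hg'v, hca, htg',
    rfl, hpg'.symm, hgg', hgv, fun e _ => (hj e).1.ne, fun e _ => (hj e).2.ne,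
    some, fun x => x.map (·.1), R.src g, R.src g', none, fun _ => Option.some_ne_none _,
    pInjOnto_some_univ _, pInjOnto_map_subtype_val _, rfl, rfl, rfl, ?_, ⟨?_, ?_⟩, ?_, ?_, ?_⟩
  · rintro (_ | e) h <;> simp_all
  · rintro (_ | e) y h hy <;> simp_all
  · rintro n m ⟨⟩ -
    simp
  · rintro (_ | e) h <;> simp_all
  · rintro (_ | e) h <;> simp_all [hgv.symm]
  · simp

/-- `g` cannot be a premiss of the `⊗`-link: with `g'` it would close a switching cycle of length
two. -/
theorem WF.exists_syncMultStep (hWF : R.WF) (hC : R.Correct) {g g' : R.Edge}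
    (sl : R.sort (R.src g) = .sync) (bl : R.box (R.src g) = none)
    (htg' : R.tgt g' = some (R.src g)) (hpg' : R.pIdx g' = R.cIdx g)
    (hpos : (R.typ g').Positive) (sm : R.sort (R.src g') = .tens)
    (bm : R.box (R.src g') = none) (hne : R.src g' ≠ R.src g) : ∃ Q, SyncMultStep R Q := by
  classical
  obtain ⟨x, y, -, hxy, pm, hpx, hpy, -⟩ := hWF.tens sm
  obtain ⟨j, hj⟩ := R.exists_idx_bound
  have hprem {z : R.Edge} (hz : z ∈ ({x, y} : Finset R.Edge)) : z ≠ g' ∧ z ≠ g := by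
    have htz := mem_prems.1 (pm ▸ hz)
    refine ⟨by rintro rfl; exact hne (Option.some_inj.1 (htz.symm.trans htg')), ?_⟩
    rintro rfl
    refine hC.false_of_two_cycle hne (fun h => hne (by rw [h]))
      (connectsAt_none htg' bm bl) (connectsAt_none htz bl bm) ?_ ?_
    · intro p hp hp'
      simp_all
    · rintro s hs ⟨-, ⟨h, -⟩ | ⟨-, h⟩⟩ -
      · simp_all
      · exact hpos.not_negative_s4 h
  obtain ⟨hxg', hxg⟩ := hprem (z := x) (by simp)
  obtain ⟨hyg', hyg⟩ := hprem (z := y) (by simp)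
  have hgg' : g ≠ g' := fun h => hne (by rw [h])
  refine ⟨{
      Edge := {e : R.Edge // e ≠ g'} ⊕ Bool
      Node := R.Node
      edgeFintype := inferInstance
      nodeFintype := inferInstance
      edgeDecEq := inferInstance
      nodeDecEq := inferInstance
      typ := fun q => match q with
        | .inl e => R.typ e.1
        | .inr b => if b then R.typ y else R.typ x
      sort := R.sort
      src := fun q => match q with
        | .inl e => if e.1 = g then R.src g' else R.src e.1
        | .inr _ => R.src g
      tgt := fun q => match q with
        | .inl e => if e.1 = x ∨ e.1 = y then some (R.src g) else R.tgt e.1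
        | .inr _ => some (R.src g')
      pIdx := fun q => match q with
        | .inl e => if e.1 = x then j else if e.1 = y then j + 1 else R.pIdx e.1
        | .inr b => if b then 1 else 0
      cIdx := fun q => match q with
        | .inl e => R.cIdx e.1
        | .inr b => if b then j + 1 else j
      box := R.box
      boxes := R.boxes }, R.src g, R.src g', g', g, x, y, j, j + 1, sl, Or.inl sm, bl, bm,
    rfl, htg', rfl, hpg'.symm, hxy, pm, hpx, hpy, by omega,
    fun e _ => ⟨(hj e).1.ne, by have := (hj e).1; omega⟩,
    fun e _ => ⟨(hj e).2.ne, by have := (hj e).2; omega⟩,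
    some, fun q => match q with | .inl e => some e.1 | .inr _ => none,
    R.src g, R.src g', .inr false, .inr true, fun _ => Option.some_ne_none _,
    pInjOnto_some_univ _, ?_, rfl, rfl, by simp, rfl, rfl, ?_, ⟨?_, ?_⟩, ?_, ?_, ?_, ?_, ?_⟩
  · refine ⟨?_, ?_, fun b hb => ⟨.inl ⟨b, hb⟩, rfl⟩⟩
    · rintro (e | b) (e' | b') bb h h' <;> simp_all [Subtype.ext_iff]
    · rintro (e | b) bb h
      · exact Option.some_inj.1 h ▸ e.2
      · simp at h
  · rintro (e | b) h <;> simp_all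
  · rintro (e | b) z h hz <;> simp_all
  · rintro n m ⟨⟩ -
    simp
  · rintro (e | b) h <;> simp_all
  · rintro (e | b) h <;> simp_all [hxy.symm]
  · rintro (e | b) h <;> simp_all [hxg.symm, hyg.symm]
  · simp
  · simp

theorem WF.exists_tensParrStep (hWF : R.WF) {c : R.Node} {s s' : R.Edge}
    (sc : R.sort c = .cut) (bc : R.box c = none) (hss' : s ≠ s') (pc : R.prems c = {s, s'})
    (st : R.sort (R.src s) = .tens) (bt : R.box (R.src s) = none)
    (sp : R.sort (R.src s') = .parr) (bp : R.box (R.src s') = none) :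
    ∃ Q, TensParrStep R Q := by
  classical
  obtain ⟨a1, a2, s₀, ha, pt, hpa1, hpa2, ct, -⟩ := hWF.tens st
  obtain ⟨b1, b2, s₀', hb, pp, hpb1, hpb2, cp, -⟩ := hWF.parr sp
  rw [← eq_of_concls_eq_singleton ct] at ct
  rw [← eq_of_concls_eq_singleton cp] at cp
  set t := R.src s
  set p := R.src s'
  have htp : t ≠ p := fun h => by simp [h, sp] at st
  have hct : c ≠ t := fun h => by simp [← h, sc] at st
  have hcp : c ≠ p := fun h => by simp [← h, sc] at sp
  have hsrc (e : R.Edge) (he : e ≠ s ∧ e ≠ s') : R.src e ≠ t ∧ R.src e ≠ p := by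
    constructor <;> intro h <;> have h := mem_concls.2 h
    · simp [ct, he.1] at h
    · simp [cp, he.2] at h
  have htgt (e : R.Edge) (h₁ : ¬(e = a1 ∨ e = b1)) (h₂ : ¬(e = a2 ∨ e = b2)) (n : R.Node)
      (hn : R.tgt e = some n) : n ≠ t ∧ n ≠ p := by
    constructor <;> rintro rfl <;> have h := mem_prems.2 hn
    · simp [pt] at h; tauto
    · simp [pp] at h; tauto
  have hab {x y : R.Edge} (hx : R.tgt x = some t) (hy : R.tgt y = some p) : x ≠ y := by
    rintro rfl; exact htp (Option.some_inj.1 (hx.symm.trans hy))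
  have hta2 : R.tgt a2 = some t := mem_prems.1 (by simp [pt])
  have htb1 : R.tgt b1 = some p := mem_prems.1 (by simp [pp])
  have hta1 : R.tgt a1 = some t := mem_prems.1 (by simp [pt])
  have htb2 : R.tgt b2 = some p := mem_prems.1 (by simp [pp])
  have hbox (n b : R.Node) (hb : R.box n = some b) : b ≠ t ∧ b ≠ p := by
    have := hWF.sort_eq_bot_of_box_eq hb
    exact ⟨by rintro rfl; simp [st] at this, by rintro rfl; simp [sp] at this⟩
  refine ⟨{
      Edge := {e : R.Edge // e ≠ s ∧ e ≠ s'}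
      Node := Option {n : R.Node // n ≠ t ∧ n ≠ p}
      edgeFintype := inferInstance
      nodeFintype := inferInstance
      edgeDecEq := inferInstance
      nodeDecEq := inferInstance
      typ := fun e => R.typ e.1
      sort := fun n => n.elim .cut fun n => R.sort n.1
      src := fun e => some ⟨R.src e.1, hsrc e.1 e.2⟩
      tgt := fun e =>
        if h₁ : e.1 = a1 ∨ e.1 = b1 then some (some ⟨c, hct, hcp⟩)
        else if h₂ : e.1 = a2 ∨ e.1 = b2 then some none
        else ((R.tgt e.1).attachWith _ (htgt e.1 h₁ h₂)).map some
      pIdx := fun e => R.pIdx e.1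
      cIdx := fun e => R.cIdx e.1
      box := fun n => n.elim none fun n => ((R.box n.1).attachWith _ (hbox n.1)).map some
      boxes := fun n => n.elim ∅ fun n =>
        Finset.univ.filter fun b => b.elim False fun b => b.1 ∈ R.boxes n.1 },
    c, t, p, s, s', a1, a2, b1, b2, sc, st, sp, bc, bt, bp, hss', pc, ct, cp,
    ha, pt, hpa1, hpa2, hb, pp, hpb1, hpb2,
    fun n => n.map (·.1), fun e => some e.1, none, fun _ => Option.some_ne_none _,
    pInjOnto_map_subtype_val _, pInjOnto_subtype_val _, rfl, ?_, rfl, rfl, rfl,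
    ⟨?_, ?_⟩, ?_, ?_⟩
  · rintro (_ | n) h <;> simp_all
  · rintro e y ⟨⟩ hy
    simp only [Set.mem_insert_iff, Set.mem_singleton_iff, not_or] at hy
    simp [hy, Option.bind_map]
  · rintro (_ | n) m h -
    · simp at h
    · simp only [Option.map_some, Option.some_inj] at h
      subst h
      refine ⟨rfl, by simp [Option.bind_map], ?_⟩
      rintro (_ | b) b' hb <;> simp_all
  · rintro e y h hy
    simp_all
  · rintro e y ⟨⟩ hy
    have : ¬(e.1 = a1 ∨ e.1 = b1) := by
      rcases hy with h | h <;> simp only [h]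
      · simp [ha.symm, hab hta2 htb1]
      · simp [(hab hta1 htb2).symm, hb.symm]
    simp [this, hy]

/-- Climbing the sync path above `g` one meets an axiom or a `⊗`-link, where a commutation
applies: otherwise the sync links met would form a switching cycle. -/
theorem WF.exists_step_of_sync_tens (hWF : R.WF) (hC : R.Correct) {g : R.Edge} {A B : Formula}
    (hg : ¬ R.HereditaryBoxConcl g) (hsync : R.sort (R.src g) = .sync)
    (htens : R.typ g = .tens A B) : ∃ Q, Step R Q := by
  by_contra hnf
  suffices hS : {l | ∃ g, R.src g = l ∧ R.sort l = .sync ∧ ¬ R.HereditaryBoxConcl g ∧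
      ∃ A B, R.typ g = .tens A B} = ∅ by
    exact hS.subset ⟨g, rfl, hsync, hg, A, B, htens⟩
  refine hC.eq_empty_of_sync_chain ?_
  rintro _ ⟨g, rfl, hsync, hg, A, B, htens⟩
  obtain ⟨g', htg', hpg', hty⟩ := hWF.exists_prem_of_sort_src_eq_sync hsync
  have hg' : ¬ R.HereditaryBoxConcl g' :=
    mt (·.of_syncStepE ⟨_, hsync, htg', rfl, hpg'.symm⟩) hg
  have hpos : (R.typ g').Positive := by
    have hpol := (hWF.sync hsync).1 g' (mem_prems.2 htg')
    rw [hty, htens] at hpol ⊢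
    exact hpol.resolve_right (by rintro ⟨⟩)
  have bl := (src_of_not_hereditaryBoxConcl hg).2
  have bm := (src_of_not_hereditaryBoxConcl hg').2
  refine ⟨hsync, bl, g', htg', hpos, g', rfl, ?_, hg', A, B, hty.trans htens⟩
  by_cases hne : R.src g' = R.src g
  · exact hne ▸ hsync
  rcases hWF.src_cases g' with hax | hbot | ⟨-, h⟩ | ⟨hm, -⟩ | ⟨-, _, _, h⟩ | ⟨h, -⟩
  · obtain ⟨Q, hQ⟩ := hWF.exists_syncAxStep hsync bl htg' hpg' hpos hax bm hne
    exact absurd ⟨Q, by simp [Step, SyncRed, hQ]⟩ hnf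
  · exact absurd hbot (src_of_not_hereditaryBoxConcl hg').1
  · simp [hty, htens] at h
  · obtain ⟨Q, hQ⟩ := hWF.exists_syncMultStep hC hsync bl htg' hpg' hpos hm bm hne
    exact absurd ⟨Q, by simp [Step, SyncRed, hQ]⟩ hnf
  · simp [hty, htens] at h
  · exact h

theorem WF.exists_step_or_cut_prem_shape (hWF : R.WF) (hC : R.Correct) {c : R.Node} {e f : R.Edge}
    (sc : R.sort c = .cut) (bc : R.box c = none) (hef : e ≠ f) (pc : R.prems c = {e, f})
    (he : ¬ R.HereditaryBoxConcl e) :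
    (∃ Q, Step R Q) ∨ R.typ e = .one ∨
      (R.sort (R.src e) = .tens ∧ ∃ A B, R.typ e = .tens A B) ∨
      (R.sort (R.src e) = .parr ∧ ∃ A B, R.typ e = .parr A B) := by
  obtain ⟨hnb, hb⟩ := src_of_not_hereditaryBoxConcl he
  rcases hWF.src_cases e with hax | hbot | ⟨-, h⟩ | h | h | ⟨hsync, hpos | hneg⟩
  · obtain ⟨Q, hQ⟩ := hWF.exists_axCutStep hC sc bc hef pc hax hb
    exact .inl ⟨Q, by simp [Step, hQ]⟩
  · exact absurd hbot hnb
  · exact .inr (.inl h)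
  · exact .inr (.inr (.inl h))
  · exact .inr (.inr (.inr h))
  · rcases hpos.eq_one_or_tens with h | ⟨A, B, h⟩
    · exact .inr (.inl h)
    · exact .inl (hWF.exists_step_of_sync_tens hC he hsync h)
  · obtain ⟨Q, hQ⟩ := hWF.exists_syncCutStep sc bc hef pc hneg hsync hb
    exact .inl ⟨Q, by simp [Step, SyncRed, hQ]⟩

end Struct

/-- **Ready cuts can be fired.**  If an SMLL net `R` contains a ready cut — a
cut link at depth 0 neither of whose premisses is a hereditary conclusion of
a box — then `R` is not a normal form of the reduction relation `→`. -/
theorem smll_ready_cut_not_normal (R : Struct) (hWF : R.WF) (hC : R.Correct)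
    (c : R.Node) (hc : R.ReadyCut c) : ∃ Q : Struct, Step R Q := by
  obtain ⟨sc, bc, hready⟩ := hc
  obtain ⟨-, e, f, hef, pc, hdual⟩ := hWF.cut sc
  have pc' : R.prems c = {f, e} := pc.trans (Finset.pair_comm e f)
  have hHe := hready e (by simp [pc])
  have hHf := hready f (by simp [pc])
  have tensParr {s s'} (hss' : s ≠ s') (pc : R.prems c = {s, s'})
      (hs : ¬ R.HereditaryBoxConcl s) (hs' : ¬ R.HereditaryBoxConcl s')
      (st : R.sort (R.src s) = .tens) (sp : R.sort (R.src s') = .parr) : ∃ Q, Step R Q :=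
    let ⟨Q, hQ⟩ := hWF.exists_tensParrStep sc bc hss' pc st
      (Struct.src_of_not_hereditaryBoxConcl hs).2 sp (Struct.src_of_not_hereditaryBoxConcl hs').2
    ⟨Q, .inr (.inl hQ)⟩
  rcases hWF.exists_step_or_cut_prem_shape hC sc bc hef pc hHe with
    h | he | ⟨se, A, B, he⟩ | ⟨se, A, B, he⟩ <;>
  rcases hWF.exists_step_or_cut_prem_shape hC sc bc hef.symm pc' hHf with
    h | hf | ⟨sf, A', B', hf⟩ | ⟨sf, A', B', hf⟩ <;>
  -- the pairs of shapes not handled by `tensParr` contradict `typ f = (typ e)⊥`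
  first
  | exact h
  | exact tensParr hef pc hHe hHf se sf
  | exact tensParr hef.symm pc' hHf hHe sf se
  | simpa [he, Formula.dual] using hdual.symm.trans hf
end
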